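/- For every word X in {D,E,A}* of length n with r A's, the weight generating function of multi-Catalan tableaux satisfies: if X = X'·D·E·X'' then weight(X) = αβ·(weight(X'·D·X'') + weight(X'·E·X'')). -/

import Mathlib

inductive MSym : Type
  | a | b | x
deriving DecidableEq

inductive Letter : Type
  | D | E | A
deriving DecidableEq

/-- The content of the diagonal box of row `i` in a staircase filling of size `n`
(boxes `(i, j)` with `i + j < n`; the diagonal box of row `i` is `(i, n-1-i)`). -/
def diagRow (n : ℕ) (F : Fin n → Fin n → Option MSym) (i : Fin n) : Option MSym :=
  F i ⟨n - 1 - (i : ℕ), by have := i.isLt; omega⟩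

def diagCol (n : ℕ) (F : Fin n → Fin n → Option MSym) (j : Fin n) : Option MSym :=
  F ⟨n - 1 - (j : ℕ), by have := j.isLt; omega⟩ j

/-- A box is forced to be empty if there is a `β` to its right in its row or an `α`
below it in its column. -/
def ForcedEmpty (n : ℕ) (F : Fin n → Fin n → Option MSym) (i j : Fin n) : Prop :=
  (∃ j' : Fin n, j < j' ∧ F i j' = some MSym.b) ∨ (∃ i' : Fin n, i < i' ∧ F i' j = some MSym.a)

/-- A multi-Catalan tableau of size `n`: every box on the diagonal is filled (α, β or x);
a box left of a β in its row or above an α in its column is empty; a non-forced box in a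
D-row and E-column contains α or β; in a D-row and A-column contains β; in an A-row and
E-column contains α; every other box is empty. -/
def IsMCT (n : ℕ) (F : Fin n → Fin n → Option MSym) : Prop :=
  (∀ i j : Fin n, n ≤ (i : ℕ) + (j : ℕ) → F i j = none) ∧
  (∀ i : Fin n, diagRow n F i ≠ none) ∧
  (∀ i j : Fin n, (i : ℕ) + (j : ℕ) < n - 1 →
    (ForcedEmpty n F i j → F i j = none) ∧
    (¬ ForcedEmpty n F i j →
      match diagRow n F i, diagCol n F j with
      | some MSym.a, some MSym.b => F i j = some MSym.a ∨ F i j = some MSym.b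
      | some MSym.a, some MSym.x => F i j = some MSym.b
      | some MSym.x, some MSym.b => F i j = some MSym.a
      | _, _ => F i j = none))

def symToLetter : Option MSym → Letter
  | some MSym.a => Letter.D
  | some MSym.b => Letter.E
  | _ => Letter.A

/-- The type of a tableau: the word in {D, E, A} read off the diagonal from top to bottom. -/
def typeWord (n : ℕ) (F : Fin n → Fin n → Option MSym) : List Letter :=
  List.ofFn fun i : Fin n => symToLetter (diagRow n F i)

def countSym (n : ℕ) (F : Fin n → Fin n → Option MSym) (s : MSym) : ℕ :=
  (Finset.univ.filter fun p : Fin n × Fin n => F p.1 p.2 = some s).card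

/-- The weight of a tableau: the product of all its α's and β's. -/
noncomputable def wt (n : ℕ) (α β : ℝ) (F : Fin n → Fin n → Option MSym) : ℝ :=
  α ^ countSym n F MSym.a * β ^ countSym n F MSym.b

/-- The weight generating function of a word: the sum of the weights over all
multi-Catalan tableaux of that type. -/
noncomputable def wordWeight (α β : ℝ) (X : List Letter) : ℝ :=
  ∑ᶠ T : {F : Fin X.length → Fin X.length → Option MSym //
      IsMCT X.length F ∧ typeWord X.length F = X}, wt X.length α β T.1

/-!
Let `D` and `E` stand in rows `p` and `p + 1`. Their diagonal boxes are `(p, p.rev + 1)`, holding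
`α`, and `(p + 1, p.rev)`, holding `β`; the corner box `(p, p.rev)` between them sees that `α` to
its right and that `β` below it, so it holds `α` or `β`.

If the corner holds `α`, row `p + 1` contains only its diagonal `β` (the boxes to its left are
forced empty by it), and column `p.rev` only this `β` and the corner `α` (the boxes above are
forced empty by it). If the corner holds `β`, row `p` contains only the corner `β` and the diagonal
`α`, and column `p.rev + 1` only that `α`. In either case delete the row and the column through
the diagonal box of the inserted letter, `E` resp. `D`. This removes one `α` and one `β`, and as
the deleted row has no `α` and the deleted column no `β` off the diagonal, no other box was forced
empty by them, so the constraints of all other boxes are unchanged. This is a bijection onto the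
tableaux of type `X'·D·X''` resp. `X'·E·X''`.
-/

instance : Fintype MSym :=
  ⟨{MSym.a, MSym.b, MSym.x}, fun s => by cases s <;> simp⟩

lemma List.ofFn_comp_succAbove {α : Type*} {n : ℕ} (f : Fin (n + 1) → α) (p : Fin (n + 1)) :
    List.ofFn (fun i => f (p.succAbove i)) = (List.ofFn f).eraseIdx p := by
  refine List.ext_getElem (by simp [List.length_eraseIdx, p.is_le]) fun k h₁ h₂ => ?_
  simp only [List.getElem_ofFn, List.getElem_eraseIdx]
  rw [List.length_ofFn] at h₁
  split_ifs with hk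
  · rw [Fin.succAbove_of_castSucc_lt _ _ hk]; rfl
  · rw [Fin.succAbove_of_le_castSucc _ _ (not_lt.1 hk)]; rfl

namespace MCT

variable {n m : ℕ}

lemma diagRow_eq (F : Fin n → Fin n → Option MSym) (i : Fin n) : diagRow n F i = F i i.rev := by
  unfold diagRow; congr 1; ext; simp only [Fin.val_rev]; omega

lemma diagCol_eq (F : Fin n → Fin n → Option MSym) (j : Fin n) : diagCol n F j = F j.rev j := by
  unfold diagCol; congr 1; ext; simp only [Fin.val_rev]; omega

def BoxRule (n : ℕ) (F : Fin n → Fin n → Option MSym) (i j : Fin n) : Prop :=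
  (ForcedEmpty n F i j → F i j = none) ∧
    (¬ ForcedEmpty n F i j →
      match diagRow n F i, diagCol n F j with
      | some MSym.a, some MSym.b => F i j = some MSym.a ∨ F i j = some MSym.b
      | some MSym.a, some MSym.x => F i j = some MSym.b
      | some MSym.x, some MSym.b => F i j = some MSym.a
      | _, _ => F i j = none)

/-- The conditions of `IsMCT` at the box `(i, j)`. As `i.rev = n - 1 - i`, the box is outside the
staircase when `i.rev < j`, on the diagonal when `j = i.rev`, and strictly inside when `j < i.rev`. -/
def IsMCTAt (n : ℕ) (F : Fin n → Fin n → Option MSym) (i j : Fin n) : Prop :=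
  (i.rev < j → F i j = none) ∧ (j = i.rev → F i j ≠ none) ∧ (j < i.rev → BoxRule n F i j)

lemma isMCT_iff_forall_isMCTAt (F : Fin n → Fin n → Option MSym) :
    IsMCT n F ↔ ∀ i j, IsMCTAt n F i j := by
  have hout (i j : Fin n) : n ≤ (i : ℕ) + j ↔ i.rev < j := by rw [Fin.lt_def, Fin.val_rev]; omega
  have hin (i j : Fin n) : (i : ℕ) + j < n - 1 ↔ j < i.rev := by rw [Fin.lt_def, Fin.val_rev]; omega
  simp only [IsMCT, IsMCTAt, BoxRule, hout, hin]
  constructor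
  · rintro ⟨h1, h2, h3⟩ i j
    exact ⟨h1 i j, fun h => h ▸ diagRow_eq F i ▸ h2 i, h3 i j⟩
  · intro h
    exact ⟨fun i j => (h i j).1, fun i => diagRow_eq F i ▸ (h i i.rev).2.1 rfl,
      fun i j => (h i j).2.2⟩

section boxes

variable {F : Fin n → Fin n → Option MSym}

lemma IsMCTAt.of_rev_lt {i j : Fin n} (hij : i.rev < j) (h : F i j = none) : IsMCTAt n F i j :=
  ⟨fun _ => h, fun e => absurd hij (e ▸ lt_irrefl _), fun h' => absurd (h'.trans hij) (lt_irrefl _)⟩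

lemma IsMCTAt.of_forcedEmpty {i j : Fin n} (hij : j < i.rev) (hF : ForcedEmpty n F i j)
    (h : F i j = none) : IsMCTAt n F i j :=
  ⟨fun h' => absurd (h'.trans hij) (lt_irrefl _), fun e => absurd hij (e ▸ lt_irrefl _),
    fun _ => ⟨fun _ => h, fun h' => absurd hF h'⟩⟩

lemma isMCTAt_of_row_eq {i : Fin n} (h : ∀ j, F i j = if j = i.rev then some MSym.b else none)
    (j : Fin n) : IsMCTAt n F i j := by
  rcases lt_trichotomy j i.rev with hj | rfl | hj
  · exact .of_forcedEmpty hj (Or.inl ⟨i.rev, hj, by simp [h]⟩) (by simp [h, hj.ne])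
  · exact ⟨fun h' => absurd h' (lt_irrefl _), fun _ => by simp [h], fun h' => absurd h' (lt_irrefl _)⟩
  · exact .of_rev_lt hj (by simp [h, hj.ne'])

lemma isMCTAt_of_col_eq {j : Fin n} (h : ∀ i, F i j = if i = j.rev then some MSym.a else none)
    (i : Fin n) : IsMCTAt n F i j := by
  rcases lt_trichotomy i j.rev with hi | rfl | hi
  · exact .of_forcedEmpty (Fin.lt_rev_iff.1 hi) (Or.inr ⟨j.rev, hi, by simp [h]⟩)
      (by simp [h, hi.ne])
  · exact ⟨fun h' => absurd h' (by simp), fun _ => by simp [h], fun h' => absurd h' (by simp)⟩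
  · exact .of_rev_lt (Fin.rev_lt_iff.2 hi) (by simp [h, hi.ne'])

variable (hF : IsMCT n F)
include hF

lemma eq_none_of_rev_lt {i j : Fin n} (h : i.rev < j) : F i j = none :=
  ((isMCT_iff_forall_isMCTAt F).1 hF i j).1 h

lemma le_rev_of_ne_none {i j : Fin n} (h : F i j ≠ none) : j ≤ i.rev :=
  not_lt.1 fun h' => h (eq_none_of_rev_lt hF h')

lemma eq_none_of_forcedEmpty {i j : Fin n} (h : ForcedEmpty n F i j) : F i j = none := by
  have hlt : j < i.rev := by
    rcases h with ⟨j', hj, hb⟩ | ⟨i', hi, ha⟩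
    · exact hj.trans_le (le_rev_of_ne_none hF (by simp [hb]))
    · exact (le_rev_of_ne_none hF (by simp [ha])).trans_lt (Fin.rev_lt_rev.2 hi)
  exact (((isMCT_iff_forall_isMCTAt F).1 hF i j).2.2 hlt).1 h

lemma row_eq_of_diag_eq_b {i : Fin n} (h : F i i.rev = some MSym.b) (j : Fin n) :
    F i j = if j = i.rev then some MSym.b else none := by
  rcases lt_trichotomy j i.rev with hj | rfl | hj
  · rw [if_neg hj.ne, eq_none_of_forcedEmpty hF (Or.inl ⟨_, hj, h⟩)]
  · rw [if_pos rfl, h]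
  · rw [if_neg hj.ne', eq_none_of_rev_lt hF hj]

lemma col_eq_of_diag_eq_a {j : Fin n} (h : F j.rev j = some MSym.a) (i : Fin n) :
    F i j = if i = j.rev then some MSym.a else none := by
  rcases lt_trichotomy i j.rev with hi | rfl | hi
  · rw [if_neg hi.ne, eq_none_of_forcedEmpty hF (Or.inr ⟨_, hi, h⟩)]
  · rw [if_pos rfl, h]
  · rw [if_neg hi.ne', eq_none_of_rev_lt hF (Fin.rev_lt_iff.2 hi)]

end boxes

section corner

variable {F : Fin (m + 1) → Fin (m + 1) → Option MSym} {p : Fin m}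
  (hF : ∀ i j : Fin (m + 1), i.rev < j → F i j = none)
  (hD : F p.castSucc p.rev.succ = some MSym.a) (hE : F p.succ p.rev.castSucc = some MSym.b)
include hF hD hE

lemma not_forcedEmpty_corner : ¬ ForcedEmpty (m + 1) F p.castSucc p.rev.castSucc := by
  rintro (⟨j, hj, hb⟩ | ⟨i, hi, ha⟩)
  · rcases (Fin.castSucc_lt_iff_succ_le.1 hj).eq_or_lt with rfl | hj
    · simp [hD] at hb
    · simp [hF p.castSucc j (by rwa [Fin.rev_castSucc])] at hb
  · rcases (Fin.castSucc_lt_iff_succ_le.1 hi).eq_or_lt with rfl | hi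
    · simp [hE] at ha
    · simp [hF i p.rev.castSucc (by rw [← Fin.rev_succ]; exact Fin.rev_lt_rev.2 hi)] at ha

lemma isMCTAt_corner_iff :
    IsMCTAt (m + 1) F p.castSucc p.rev.castSucc ↔
      F p.castSucc p.rev.castSucc = some MSym.a ∨ F p.castSucc p.rev.castSucc = some MSym.b := by
  have hlt : p.rev.castSucc < p.castSucc.rev := by
    rw [Fin.rev_castSucc]; exact Fin.castSucc_lt_succ
  have hrow : diagRow (m + 1) F p.castSucc = some MSym.a := by rw [diagRow_eq, Fin.rev_castSucc, hD]
  have hcol : diagCol (m + 1) F p.rev.castSucc = some MSym.b := by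
    rw [diagCol_eq, Fin.rev_castSucc, Fin.rev_rev, hE]
  have hnf := not_forcedEmpty_corner hF hD hE
  simp only [IsMCTAt, BoxRule, hrow, hcol, hlt, hlt.ne, hlt.not_gt, hnf]
  simp

end corner

lemma corner_eq_a_or_b {p : Fin m} {T : Fin (m + 1) → Fin (m + 1) → Option MSym}
    (hT : IsMCT (m + 1) T) (hD : T p.castSucc p.rev.succ = some MSym.a)
    (hE : T p.succ p.rev.castSucc = some MSym.b) :
    T p.castSucc p.rev.castSucc = some MSym.a ∨ T p.castSucc p.rev.castSucc = some MSym.b :=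
  (isMCTAt_corner_iff (fun _ _ => eq_none_of_rev_lt hT) hD hE).1
    ((isMCT_iff_forall_isMCTAt T).1 hT _ _)

lemma countSym_eq_sum (F : Fin n → Fin n → Option MSym) (s : MSym) :
    countSym n F s = ∑ i, ∑ j, if F i j = some s then 1 else 0 := by
  rw [countSym, Finset.card_filter, Fintype.sum_prod_type]

/-- Deletes row `p` and column `p.rev`, which cross at the diagonal box of row `p`. -/
def eraseCross (p : Fin (m + 1)) (F : Fin (m + 1) → Fin (m + 1) → Option MSym) :
    Fin m → Fin m → Option MSym :=
  fun i j => F (p.succAbove i) (p.rev.succAbove j)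

/-- Inverse of `eraseCross p`: `r` is the new row `p`, and `c` the new column `p.rev` off row `p`. -/
def insertCross (p : Fin (m + 1)) (r : Fin (m + 1) → Option MSym) (c : Fin m → Option MSym)
    (G : Fin m → Fin m → Option MSym) : Fin (m + 1) → Fin (m + 1) → Option MSym :=
  Fin.insertNth p r fun i => Fin.insertNth p.rev (c i) (G i)

section insertCross

variable (p : Fin (m + 1)) (r : Fin (m + 1) → Option MSym) (c : Fin m → Option MSym)
  (G : Fin m → Fin m → Option MSym)

@[simp] lemma insertCross_apply_self (j : Fin (m + 1)) : insertCross p r c G p j = r j := by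
  simp [insertCross]

@[simp] lemma insertCross_apply_succAbove_rev (i : Fin m) :
    insertCross p r c G (p.succAbove i) p.rev = c i := by
  simp [insertCross]

@[simp] lemma insertCross_apply_succAbove_succAbove (i j : Fin m) :
    insertCross p r c G (p.succAbove i) (p.rev.succAbove j) = G i j := by
  simp [insertCross]

@[simp] lemma eraseCross_insertCross : eraseCross p (insertCross p r c G) = G := by
  ext i j; simp [eraseCross]

lemma countSym_insertCross (s : MSym) :
    countSym (m + 1) (insertCross p r c G) s =
      countSym m G s + (Finset.univ.filter fun j => r j = some s).card +
        (Finset.univ.filter fun i => c i = some s).card := by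
  simp only [countSym_eq_sum, Finset.card_filter]
  rw [Fin.sum_univ_succAbove _ p]
  simp only [insertCross_apply_self]
  conv_lhs => arg 2; arg 2; ext i; rw [Fin.sum_univ_succAbove _ p.rev]
  simp only [insertCross_apply_succAbove_rev, insertCross_apply_succAbove_succAbove,
    Finset.sum_add_distrib]
  ring

end insertCross

lemma insertCross_eraseCross {p : Fin (m + 1)} {r : Fin (m + 1) → Option MSym}
    {c : Fin m → Option MSym} {F : Fin (m + 1) → Fin (m + 1) → Option MSym} (hr : F p = r)
    (hc : ∀ i, F (p.succAbove i) p.rev = c i) : insertCross p r c (eraseCross p F) = F := by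
  rw [← hr, ← funext hc]
  unfold insertCross eraseCross
  conv_rhs => rw [← Fin.insertNth_self_removeNth p F]
  congr 1; ext i : 1
  exact Fin.insertNth_self_removeNth p.rev (F (p.succAbove i))

section eraseCross

variable {p : Fin (m + 1)} {F : Fin (m + 1) → Fin (m + 1) → Option MSym}
  (hrow : ∀ j ≠ p.rev, F p j ≠ some MSym.a) (hcol : ∀ i ≠ p, F i p.rev ≠ some MSym.b)
include hrow hcol

lemma forcedEmpty_eraseCross_iff (i j : Fin m) :
    ForcedEmpty m (eraseCross p F) i j ↔
      ForcedEmpty (m + 1) F (p.succAbove i) (p.rev.succAbove j) := by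
  constructor
  · rintro (⟨j', hj, hb⟩ | ⟨i', hi, ha⟩)
    · exact Or.inl ⟨_, Fin.succAbove_lt_succAbove_iff.2 hj, hb⟩
    · exact Or.inr ⟨_, Fin.succAbove_lt_succAbove_iff.2 hi, ha⟩
  · rintro (⟨j', hj, hb⟩ | ⟨i', hi, ha⟩)
    · obtain ⟨j', rfl⟩ := Fin.exists_succAbove_eq (y := p.rev) (x := j')
        fun h => hcol _ (Fin.succAbove_ne p i) (h ▸ hb)
      exact Or.inl ⟨j', Fin.succAbove_lt_succAbove_iff.1 hj, hb⟩
    · obtain ⟨i', rfl⟩ := Fin.exists_succAbove_eq (y := p) (x := i')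
        fun h => hrow _ (Fin.succAbove_ne p.rev j) (h ▸ ha)
      exact Or.inr ⟨i', Fin.succAbove_lt_succAbove_iff.1 hi, ha⟩

lemma isMCTAt_eraseCross_iff (i j : Fin m) :
    IsMCTAt m (eraseCross p F) i j ↔ IsMCTAt (m + 1) F (p.succAbove i) (p.rev.succAbove j) := by
  simp only [IsMCTAt, BoxRule, diagRow_eq, diagCol_eq, forcedEmpty_eraseCross_iff hrow hcol,
    eraseCross, Fin.rev_succAbove, Fin.rev_rev, Fin.succAbove_lt_succAbove_iff,
    Fin.succAbove_right_inj]

lemma isMCT_iff_eraseCross :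
    IsMCT (m + 1) F ↔
      IsMCT m (eraseCross p F) ∧ ∀ i j, (i = p ∨ j = p.rev) → IsMCTAt (m + 1) F i j := by
  simp only [isMCT_iff_forall_isMCTAt, isMCTAt_eraseCross_iff hrow hcol]
  constructor
  · exact fun h => ⟨fun i j => h _ _, fun i j _ => h i j⟩
  · rintro ⟨hoff, hon⟩ i j
    by_cases hc : i = p ∨ j = p.rev
    · exact hon i j hc
    · push Not at hc
      obtain ⟨i', rfl⟩ := Fin.exists_succAbove_eq hc.1
      obtain ⟨j', rfl⟩ := Fin.exists_succAbove_eq hc.2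
      exact hoff i' j'

end eraseCross

section isMCT_insertCross

variable {p : Fin (m + 1)} {r : Fin (m + 1) → Option MSym} {c : Fin m → Option MSym}
  {G : Fin m → Fin m → Option MSym}

lemma isMCT_insertCross_iff (hr : ∀ j ≠ p.rev, r j ≠ some MSym.a) (hc : ∀ i, c i ≠ some MSym.b) :
    IsMCT (m + 1) (insertCross p r c G) ↔
      IsMCT m G ∧ ∀ i j, (i = p ∨ j = p.rev) → IsMCTAt (m + 1) (insertCross p r c G) i j := by
  rw [isMCT_iff_eraseCross (p := p), eraseCross_insertCross]
  · simpa using hr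
  · intro i hi
    obtain ⟨i, rfl⟩ := Fin.exists_succAbove_eq hi
    simpa using hc i

lemma insertCross_eq_none_of_rev_lt (hG : IsMCT m G) (hr : ∀ j, p.rev < j → r j = none)
    (hc : ∀ i, p < p.succAbove i → c i = none) {i j : Fin (m + 1)} (hij : i.rev < j) :
    insertCross p r c G i j = none := by
  by_cases hi : i = p
  · subst hi; simpa using hr j hij
  obtain ⟨i, rfl⟩ := Fin.exists_succAbove_eq hi
  by_cases hj : j = p.rev
  · subst hj; simpa using hc i (Fin.rev_lt_rev.1 hij)
  obtain ⟨j, rfl⟩ := Fin.exists_succAbove_eq hj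
  rw [Fin.rev_succAbove, Fin.succAbove_lt_succAbove_iff] at hij
  simpa using eq_none_of_rev_lt hG hij

end isMCT_insertCross

lemma symToLetter_eq_D {o : Option MSym} : symToLetter o = Letter.D ↔ o = some MSym.a := by
  rcases o with _ | _ | _ | _ <;> simp [symToLetter]

lemma symToLetter_eq_E {o : Option MSym} : symToLetter o = Letter.E ↔ o = some MSym.b := by
  rcases o with _ | _ | _ | _ <;> simp [symToLetter]

lemma getElem?_typeWord (F : Fin n → Fin n → Option MSym) (i : Fin n) :
    (typeWord n F)[(i : ℕ)]? = some (symToLetter (F i i.rev)) := by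
  simp [typeWord, diagRow_eq]

lemma eq_a_of_typeWord {W : List Letter} {F : Fin n → Fin n → Option MSym}
    (hF : typeWord n F = W) {i : Fin n} (h : W[(i : ℕ)]? = some Letter.D) :
    F i i.rev = some MSym.a := by
  rw [← symToLetter_eq_D, ← Option.some_inj, ← h, ← hF, getElem?_typeWord]

lemma eq_b_of_typeWord {W : List Letter} {F : Fin n → Fin n → Option MSym}
    (hF : typeWord n F = W) {i : Fin n} (h : W[(i : ℕ)]? = some Letter.E) :
    F i i.rev = some MSym.b := by
  rw [← symToLetter_eq_E, ← Option.some_inj, ← h, ← hF, getElem?_typeWord]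

lemma typeWord_eraseCross (p : Fin (m + 1)) (F : Fin (m + 1) → Fin (m + 1) → Option MSym) :
    typeWord m (eraseCross p F) = (typeWord (m + 1) F).eraseIdx p := by
  simp only [typeWord, diagRow_eq, ← List.ofFn_comp_succAbove, eraseCross, Fin.rev_succAbove]

lemma typeWord_eq_iff_eraseCross (p : Fin (m + 1)) {F : Fin (m + 1) → Fin (m + 1) → Option MSym}
    {W : List Letter} (hW : W.length = m + 1) :
    typeWord (m + 1) F = W ↔
      typeWord m (eraseCross p F) = W.eraseIdx p ∧
        W[(p : ℕ)]? = some (symToLetter (F p p.rev)) := by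
  have hp : (p : ℕ) < (typeWord (m + 1) F).length := by simp [typeWord, p.is_le]
  have hpW : (p : ℕ) < W.length := by rw [hW]; exact p.isLt
  have hF : (typeWord (m + 1) F)[(p : ℕ)] = symToLetter (F p p.rev) := by
    simp only [typeWord, List.getElem_ofFn, diagRow_eq]
  rw [typeWord_eraseCross]
  constructor
  · rintro rfl
    exact ⟨rfl, by rw [List.getElem?_eq_getElem hp, hF]⟩
  · rintro ⟨he, hg⟩
    rw [List.getElem?_eq_getElem hpW] at hg
    rw [← List.insertIdx_eraseIdx_getElem hp, ← List.insertIdx_eraseIdx_getElem hpW, he, hF,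
      Option.some_inj.1 hg]


section insertE

variable {p : Fin m} {G : Fin m → Fin m → Option MSym}

/-- From a tableau of type `X'·D·X''` with `D` in row `p`, the tableau of type `X'·D·E·X''` whose
corner `(p, p.rev)` holds `α`: a new row `p + 1` holding only its diagonal `β`, and a new column
holding only that `β` and the corner `α`. -/
def insertE (p : Fin m) (G : Fin m → Fin m → Option MSym) :
    Fin (m + 1) → Fin (m + 1) → Option MSym :=
  insertCross p.succ (fun j => if j = p.rev.castSucc then some MSym.b else none)
    (fun i => if i = p then some MSym.a else none) G

@[simp] lemma eraseCross_insertE : eraseCross p.succ (insertE p G) = G :=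
  eraseCross_insertCross _ _ _ G

lemma insertE_apply_self (j : Fin (m + 1)) :
    insertE p G p.succ j = if j = p.rev.castSucc then some MSym.b else none := by
  simp [insertE]

lemma insertE_apply_succAbove_rev (i : Fin m) :
    insertE p G (p.succ.succAbove i) p.rev.castSucc = if i = p then some MSym.a else none := by
  rw [← Fin.rev_succ]; simp [insertE]

lemma insertE_apply_corner : insertE p G p.castSucc p.rev.castSucc = some MSym.a := by
  simpa using insertE_apply_succAbove_rev (p := p) (G := G) p

lemma insertE_apply_castSucc_succ : insertE p G p.castSucc p.rev.succ = G p p.rev := by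
  unfold insertE
  simpa [Fin.rev_succ] using insertCross_apply_succAbove_succAbove p.succ _ _ G p p.rev

lemma wt_insertE (α β : ℝ) : wt (m + 1) α β (insertE p G) = α * β * wt m α β G := by
  simp only [wt, insertE, countSym_insertCross]
  simp [Finset.filter_eq']
  ring

lemma insertE_eraseCross {T : Fin (m + 1) → Fin (m + 1) → Option MSym} (hT : IsMCT (m + 1) T)
    (hE : T p.succ p.rev.castSucc = some MSym.b)
    (hc : T p.castSucc p.rev.castSucc = some MSym.a) : insertE p (eraseCross p.succ T) = T := by
  refine insertCross_eraseCross (funext fun j => ?_) fun i => ?_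
  · simpa [Fin.rev_succ] using row_eq_of_diag_eq_b hT (i := p.succ) (by rwa [Fin.rev_succ]) j
  · rw [Fin.rev_succ]
    rcases lt_trichotomy i p with hi | rfl | hi
    · rw [Fin.succAbove_succ_of_le _ _ hi.le, if_neg hi.ne]
      exact eq_none_of_forcedEmpty hT (Or.inr ⟨p.castSucc, Fin.castSucc_lt_castSucc_iff.2 hi, hc⟩)
    · simpa using hc
    · rw [Fin.succAbove_succ_of_lt _ _ hi, if_neg hi.ne']
      exact eq_none_of_rev_lt hT (by simpa [Fin.rev_succ] using hi)

lemma isMCT_insertE_iff (hd : G p p.rev = some MSym.a) :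
    IsMCT (m + 1) (insertE p G) ↔ IsMCT m G := by
  have hrow : ∀ j, insertE p G p.succ j = if j = p.succ.rev then some MSym.b else none := by
    simp [insertE_apply_self, Fin.rev_succ]
  refine ⟨fun h => ?_, fun hG => ?_⟩
  · refine ((isMCT_insertCross_iff ?_ ?_).1 h).1 <;> simp [Fin.rev_succ]
  have hstair : ∀ i j : Fin (m + 1), i.rev < j → insertE p G i j = none :=
    fun i j => insertCross_eq_none_of_rev_lt hG (by simp +contextual [Fin.rev_succ, ne_of_gt])
      fun i hi => if_neg <| by
        rintro rfl; rw [Fin.succAbove_succ_self] at hi; exact lt_asymm hi Fin.castSucc_lt_succ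
  refine (isMCT_insertCross_iff (by simp [Fin.rev_succ]) (by simp)).2 ⟨hG, ?_⟩
  rintro i j (rfl | rfl)
  · exact isMCTAt_of_row_eq hrow j
  by_cases hi : i = p.succ
  · subst hi; exact isMCTAt_of_row_eq hrow _
  obtain ⟨i, rfl⟩ := Fin.exists_succAbove_eq hi
  have hval := insertE_apply_succAbove_rev (p := p) (G := G) i
  rw [Fin.rev_succ]
  rcases lt_trichotomy i p with hi | rfl | hi
  · rw [if_neg hi.ne, Fin.succAbove_succ_of_le _ _ hi.le] at hval
    rw [Fin.succAbove_succ_of_le _ _ hi.le]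
    refine .of_forcedEmpty ?_ (Or.inr ⟨p.castSucc, Fin.castSucc_lt_castSucc_iff.2 hi,
      insertE_apply_corner⟩) hval
    rw [Fin.rev_castSucc]
    exact Fin.castSucc_lt_succ.trans_le (Fin.succ_le_succ_iff.2 (Fin.rev_le_rev.2 hi.le))
  · rw [Fin.succAbove_succ_self]
    exact (isMCTAt_corner_iff hstair (by rw [insertE_apply_castSucc_succ, hd])
      (by simp [insertE_apply_self])).2 (Or.inl insertE_apply_corner)
  · rw [if_neg hi.ne', Fin.succAbove_succ_of_lt _ _ hi] at hval
    rw [Fin.succAbove_succ_of_lt _ _ hi]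
    exact .of_rev_lt (by simpa [Fin.rev_succ] using hi) hval

end insertE

section insertD

variable {p : Fin m} {G : Fin m → Fin m → Option MSym}

/-- From a tableau of type `X'·E·X''` with `E` in row `p`, the tableau of type `X'·D·E·X''` whose
corner `(p, p.rev)` holds `β`: a new row `p` holding only that `β` and its diagonal `α`, and a new
column holding only that `α`. -/
def insertD (p : Fin m) (G : Fin m → Fin m → Option MSym) :
    Fin (m + 1) → Fin (m + 1) → Option MSym :=
  insertCross p.castSucc
    (fun j => if j = p.rev.succ then some MSym.a
      else if j = p.rev.castSucc then some MSym.b else none)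
    (fun _ => none) G

@[simp] lemma eraseCross_insertD : eraseCross p.castSucc (insertD p G) = G :=
  eraseCross_insertCross _ _ _ G

lemma insertD_apply_self (j : Fin (m + 1)) : insertD p G p.castSucc j =
    if j = p.rev.succ then some MSym.a else if j = p.rev.castSucc then some MSym.b else none := by
  simp [insertD]

lemma insertD_apply_rev (i : Fin (m + 1)) :
    insertD p G i p.rev.succ = if i = p.castSucc then some MSym.a else none := by
  by_cases hi : i = p.castSucc
  · simp [hi, insertD_apply_self]
  obtain ⟨i, rfl⟩ := Fin.exists_succAbove_eq hi
  rw [if_neg hi, ← Fin.rev_castSucc]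
  simp [insertD]

lemma insertD_apply_corner : insertD p G p.castSucc p.rev.castSucc = some MSym.b := by
  simp [insertD_apply_self, (Fin.castSucc_lt_succ (i := p.rev)).ne]

lemma insertD_apply_succ_castSucc : insertD p G p.succ p.rev.castSucc = G p p.rev := by
  unfold insertD
  simpa [Fin.rev_castSucc] using insertCross_apply_succAbove_succAbove p.castSucc _ _ G p p.rev

lemma wt_insertD (α β : ℝ) : wt (m + 1) α β (insertD p G) = α * β * wt m α β G := by
  simp only [wt, insertD, countSym_insertCross]
  have hb : (Finset.univ.filter fun j : Fin (m + 1) => (if j = p.rev.succ then some MSym.a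
      else if j = p.rev.castSucc then some MSym.b else none) = some MSym.b) = {p.rev.castSucc} := by
    ext j; by_cases h : j = p.rev.succ <;> simp [h, Fin.castSucc_lt_succ.ne']
  simp [hb, Finset.filter_eq']
  ring

lemma insertD_eraseCross {T : Fin (m + 1) → Fin (m + 1) → Option MSym} (hT : IsMCT (m + 1) T)
    (hD : T p.castSucc p.rev.succ = some MSym.a)
    (hc : T p.castSucc p.rev.castSucc = some MSym.b) : insertD p (eraseCross p.castSucc T) = T := by
  refine insertCross_eraseCross (funext fun j => ?_) fun i => ?_
  · rcases lt_trichotomy j p.rev.castSucc with hj | rfl | hj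
    · rw [if_neg (hj.trans Fin.castSucc_lt_succ).ne, if_neg hj.ne]
      exact eq_none_of_forcedEmpty hT (Or.inl ⟨_, hj, hc⟩)
    · simp [hc, (Fin.castSucc_lt_succ (i := p.rev)).ne]
    · rcases (Fin.castSucc_lt_iff_succ_le.1 hj).eq_or_lt with rfl | hj'
      · simp [hD]
      · rw [if_neg hj'.ne', if_neg hj.ne']
        exact eq_none_of_rev_lt hT (by rwa [Fin.rev_castSucc])
  · have hcol := col_eq_of_diag_eq_a hT (j := p.castSucc.rev)
      (by rwa [Fin.rev_rev, Fin.rev_castSucc])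
    rw [hcol, Fin.rev_rev, if_neg (Fin.succAbove_ne _ _)]

lemma isMCT_insertD_iff (hd : G p p.rev = some MSym.b) :
    IsMCT (m + 1) (insertD p G) ↔ IsMCT m G := by
  have hcol : ∀ i, insertD p G i p.castSucc.rev =
      if i = p.castSucc.rev.rev then some MSym.a else none := by
    intro i; rw [Fin.rev_rev, Fin.rev_castSucc, insertD_apply_rev]
  refine ⟨fun h => ?_, fun hG => ?_⟩
  · refine ((isMCT_insertCross_iff ?_ ?_).1 h).1 <;> simp +contextual [Fin.rev_castSucc]
  have hstair : ∀ i j : Fin (m + 1), i.rev < j → insertD p G i j = none :=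
    fun i j => insertCross_eq_none_of_rev_lt hG (fun j hj => by
      rw [Fin.rev_castSucc] at hj
      simp [hj.ne', (Fin.castSucc_lt_succ.trans hj).ne']) fun _ _ => rfl
  refine (isMCT_insertCross_iff (by simp +contextual [Fin.rev_castSucc]) (by simp)).2 ⟨hG, ?_⟩
  rintro i j (rfl | rfl)
  · by_cases hj : j = p.castSucc.rev
    · subst hj; exact isMCTAt_of_col_eq hcol _
    rw [Fin.rev_castSucc] at hj
    rcases lt_trichotomy j p.rev.castSucc with hj' | rfl | hj'
    · refine .of_forcedEmpty (by rw [Fin.rev_castSucc]; exact hj'.trans Fin.castSucc_lt_succ)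
        (Or.inl ⟨_, hj', insertD_apply_corner⟩) ?_
      exact (insertD_apply_self j).trans (by rw [if_neg hj, if_neg hj'.ne])
    · exact (isMCTAt_corner_iff hstair (by simp [insertD_apply_self])
        (by rw [insertD_apply_succ_castSucc, hd])).2 (Or.inr insertD_apply_corner)
    · have hj'' : p.rev.succ < j := lt_of_le_of_ne (Fin.castSucc_lt_iff_succ_le.1 hj') (Ne.symm hj)
      exact .of_rev_lt (by rwa [Fin.rev_castSucc]) ((insertD_apply_self j).trans
        (by rw [if_neg hj, if_neg hj'.ne']))
  · exact isMCTAt_of_col_eq hcol i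

end insertD

open Classical in
noncomputable def mcts (n : ℕ) (X : List Letter) : Finset (Fin n → Fin n → Option MSym) :=
  Finset.univ.filter fun F => IsMCT n F ∧ typeWord n F = X

lemma mem_mcts {X : List Letter} {F : Fin n → Fin n → Option MSym} :
    F ∈ mcts n X ↔ IsMCT n F ∧ typeWord n F = X := by
  simp [mcts]

lemma wordWeight_eq_sum (α β : ℝ) {X : List Letter} (hX : X.length = n) :
    wordWeight α β X = ∑ F ∈ mcts n X, wt n α β F := by
  classical
  subst hX
  rw [wordWeight, finsum_eq_sum_of_fintype]
  exact (Finset.sum_subtype _ (fun _ => mem_mcts) _).symm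

section sums

variable {W : List Letter} {p : Fin m}
  (hD : W[(p : ℕ)]? = some Letter.D) (hE : W[(p : ℕ) + 1]? = some Letter.E)
include hD hE

lemma diag_eq_of_mem_mcts {T : Fin (m + 1) → Fin (m + 1) → Option MSym}
    (hT : T ∈ mcts (m + 1) W) :
    T p.castSucc p.rev.succ = some MSym.a ∧ T p.succ p.rev.castSucc = some MSym.b := by
  obtain ⟨-, hTW⟩ := mem_mcts.1 hT
  exact ⟨Fin.rev_castSucc p ▸ eq_a_of_typeWord hTW (i := p.castSucc) hD,
    Fin.rev_succ p ▸ eq_b_of_typeWord hTW (i := p.succ) hE⟩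

lemma sum_mcts_eq_sum_corner_a_add_sum_corner_b {M : Type*} [AddCommMonoid M]
    (f : (Fin (m + 1) → Fin (m + 1) → Option MSym) → M) :
    ∑ T ∈ mcts (m + 1) W, f T =
      ∑ T ∈ (mcts (m + 1) W).filter (fun T => T p.castSucc p.rev.castSucc = some MSym.a), f T +
      ∑ T ∈ (mcts (m + 1) W).filter (fun T => T p.castSucc p.rev.castSucc = some MSym.b), f T := by
  rw [← Finset.sum_filter_add_sum_filter_not _
    (fun T => T p.castSucc p.rev.castSucc = some MSym.a)]
  congr 1
  refine Finset.sum_congr (Finset.filter_congr fun T hT => ?_) fun _ _ => rfl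
  obtain ⟨hD', hE'⟩ := diag_eq_of_mem_mcts hD hE hT
  rcases corner_eq_a_or_b (mem_mcts.1 hT).1 hD' hE' with h | h <;> simp [h]

variable (α β : ℝ) (hW : W.length = m + 1)
include hW

lemma sum_wt_corner_a :
    ∑ T ∈ (mcts (m + 1) W).filter (fun T => T p.castSucc p.rev.castSucc = some MSym.a),
      wt (m + 1) α β T = α * β * ∑ G ∈ mcts m (W.eraseIdx (p + 1)), wt m α β G := by
  have hS : ∀ T ∈ (mcts (m + 1) W).filter (fun T => T p.castSucc p.rev.castSucc = some MSym.a),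
      eraseCross p.succ T ∈ mcts m (W.eraseIdx (p + 1)) ∧
        insertE p (eraseCross p.succ T) = T := by
    intro T hT
    obtain ⟨hTm, hc⟩ := Finset.mem_filter.1 hT
    obtain ⟨hT, hTW⟩ := mem_mcts.1 hTm
    obtain ⟨hD', hE'⟩ := diag_eq_of_mem_mcts hD hE hTm
    have hround := insertE_eraseCross hT hE' hc
    have hd : eraseCross p.succ T p p.rev = some MSym.a := by
      simpa [eraseCross, Fin.rev_succ] using hD'
    refine ⟨mem_mcts.2 ⟨(isMCT_insertE_iff hd).1 (by rwa [hround]), ?_⟩, hround⟩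
    simpa using ((typeWord_eq_iff_eraseCross p.succ hW).1 hTW).1
  rw [Finset.mul_sum]
  refine (Finset.sum_nbij' (insertE p) (eraseCross p.succ) (fun G hG => ?_)
    (fun T hT => (hS T hT).1) (fun G _ => eraseCross_insertE) (fun T hT => (hS T hT).2)
    fun G _ => (wt_insertE α β).symm).symm
  obtain ⟨hG, hGW⟩ := mem_mcts.1 hG
  have hd := eq_a_of_typeWord hGW (i := p)
    (by rwa [List.getElem?_eraseIdx_of_lt (Nat.lt_succ_self _)])
  refine Finset.mem_filter.2 ⟨mem_mcts.2 ⟨(isMCT_insertE_iff hd).2 hG, ?_⟩, insertE_apply_corner⟩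
  refine (typeWord_eq_iff_eraseCross p.succ hW).2 ⟨by rwa [eraseCross_insertE], ?_⟩
  rw [Fin.val_succ, hE, Fin.rev_succ, insertE_apply_self, if_pos rfl]; rfl

lemma sum_wt_corner_b :
    ∑ T ∈ (mcts (m + 1) W).filter (fun T => T p.castSucc p.rev.castSucc = some MSym.b),
      wt (m + 1) α β T = α * β * ∑ G ∈ mcts m (W.eraseIdx p), wt m α β G := by
  have hS : ∀ T ∈ (mcts (m + 1) W).filter (fun T => T p.castSucc p.rev.castSucc = some MSym.b),
      eraseCross p.castSucc T ∈ mcts m (W.eraseIdx p) ∧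
        insertD p (eraseCross p.castSucc T) = T := by
    intro T hT
    obtain ⟨hTm, hc⟩ := Finset.mem_filter.1 hT
    obtain ⟨hT, hTW⟩ := mem_mcts.1 hTm
    obtain ⟨hD', hE'⟩ := diag_eq_of_mem_mcts hD hE hTm
    have hround := insertD_eraseCross hT hD' hc
    have hd : eraseCross p.castSucc T p p.rev = some MSym.b := by
      simpa [eraseCross, Fin.rev_castSucc] using hE'
    refine ⟨mem_mcts.2 ⟨(isMCT_insertD_iff hd).1 (by rwa [hround]), ?_⟩, hround⟩
    simpa using ((typeWord_eq_iff_eraseCross p.castSucc hW).1 hTW).1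
  rw [Finset.mul_sum]
  refine (Finset.sum_nbij' (insertD p) (eraseCross p.castSucc) (fun G hG => ?_)
    (fun T hT => (hS T hT).1) (fun G _ => eraseCross_insertD) (fun T hT => (hS T hT).2)
    fun G _ => (wt_insertD α β).symm).symm
  obtain ⟨hG, hGW⟩ := mem_mcts.1 hG
  have hd := eq_b_of_typeWord hGW (i := p) (by rwa [List.getElem?_eraseIdx_of_ge le_rfl])
  refine Finset.mem_filter.2 ⟨mem_mcts.2 ⟨(isMCT_insertD_iff hd).2 hG, ?_⟩, insertD_apply_corner⟩
  refine (typeWord_eq_iff_eraseCross p.castSucc hW).2 ⟨by rwa [eraseCross_insertD], ?_⟩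
  rw [Fin.val_castSucc, hD, Fin.rev_castSucc, insertD_apply_self, if_pos rfl]; rfl

end sums

end MCT

open MCT in
/-- If X = X'·D·E·X'' then weight(X) = αβ·(weight(X'·D·X'') + weight(X'·E·X'')). -/
theorem wordWeight_DE (α β : ℝ) (X' X'' : List Letter) :
    wordWeight α β (X' ++ [Letter.D, Letter.E] ++ X'') =
      α * β * (wordWeight α β (X' ++ [Letter.D] ++ X'') +
        wordWeight α β (X' ++ [Letter.E] ++ X'')) := by
  set W := X' ++ [Letter.D, Letter.E] ++ X''
  let p : Fin (X'.length + 1 + X''.length) := ⟨X'.length, by omega⟩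
  have hW : W.length = X'.length + 1 + X''.length + 1 := by simp [W]; omega
  have hD : W[(p : ℕ)]? = some Letter.D := by simp [W, p]
  have hE : W[(p : ℕ) + 1]? = some Letter.E := by simp [W, p]
  have hWD : W.eraseIdx (p + 1) = X' ++ [Letter.D] ++ X'' := by
    simp [W, p, List.eraseIdx_append_of_length_le]
  have hWE : W.eraseIdx p = X' ++ [Letter.E] ++ X'' := by
    simp [W, p, List.eraseIdx_append_of_length_le]
  rw [wordWeight_eq_sum α β hW, sum_mcts_eq_sum_corner_a_add_sum_corner_b hD hE,
    sum_wt_corner_a hD hE α β hW, sum_wt_corner_b hD hE α β hW, hWD, hWE,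
    ← wordWeight_eq_sum α β (by simp; omega), ← wordWeight_eq_sum α β (by simp; omega)]
  ring
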